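/- arXiv:1511.08072 — 2 statements merged into one kernel-verified Lean document; each statement's English description precedes it below -/
import Mathlib

section
/- For elements v⁰, v¹, v² of a real inner product space, one has ⟨(3/2)v² - 2v¹ + (1/2)v⁰, v²⟩ = (1/2)(‖χ¹‖_G² - ‖χ⁰‖_G²) + (1/4)‖v² - 2v¹ + v⁰‖², where χ⁰ = (v⁰, v¹), χ¹ = (v¹, v²), and for a pair χ = (a, b) the G-norm is defined by ‖χ‖_G² = (1/2)‖a‖² - 2⟨a, b⟩ + (5/2)‖b‖². -/
open RealInnerProductSpace

/-- G-norm identity for the BDF2 time derivative term. -/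
theorem bdf2_Gnorm_identity {H : Type*} [NormedAddCommGroup H]
    [InnerProductSpace ℝ H] (v0 v1 v2 : H) :
    ⟪(3 / 2 : ℝ) • v2 - (2 : ℝ) • v1 + (1 / 2 : ℝ) • v0, v2⟫ =
      (1 / 2) *
        (((1 / 2) * ‖v1‖ ^ 2 - 2 * ⟪v1, v2⟫ + (5 / 2) * ‖v2‖ ^ 2) -
         ((1 / 2) * ‖v0‖ ^ 2 - 2 * ⟪v0, v1⟫ + (5 / 2) * ‖v1‖ ^ 2)) +
      (1 / 4) * ‖v2 - (2 : ℝ) • v1 + v0‖ ^ 2 := by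
  have h := fun x : H => real_inner_self_eq_norm_sq x
  rw [← h, ← h, ← h, ← h]
  simp only [inner_add_left, inner_add_right, inner_sub_left, inner_sub_right,
    inner_smul_left, inner_smul_right, RCLike.ofReal_real_eq_id, id, starRingEnd_apply, star_trivial]
  rw [real_inner_comm v0 v1, real_inner_comm v0 v2, real_inner_comm v1 v2]
  ring
end

section
/- Suppose a sequence of nonnegative reals (a_n) satisfies a_{n+1} ≤ (1/α)a_n + (Δt/α)(K + β a_{n+1}) for all n, where α > 1, K, β, Δt ≥ 0, and additionally the weighted sums S_N = Δt ∑_{k=1}^{N} α^{k-N-1} a_k are uniformly bounded by M for all N. Then a_N ≤ α^{-N} a_0 + K·Δt·α/(α-1) + β M for all N. -/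
/-- Recursion with weighted-sum control, used for the logarithmic-in-h bound. -/
theorem recursion_with_weighted_sum (α K β Δt M : ℝ) (a : ℕ → ℝ)
    (hα : 1 < α) (hK : 0 ≤ K) (hβ : 0 ≤ β) (hΔt : 0 ≤ Δt) (hM : 0 ≤ M)
    (ha : ∀ n, 0 ≤ a n)
    (hrec : ∀ n, a (n + 1) ≤ (1 / α) * a n + (Δt / α) * (K + β * a (n + 1)))
    (hsum : ∀ N : ℕ, Δt * ∑ k ∈ Finset.Icc 1 N, α ^ ((k : ℤ) - N - 1) * a k ≤ M) :
    ∀ N : ℕ, a N ≤ α ^ (-(N : ℤ)) * a 0 + K * Δt * α / (α - 1) + β * M := by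
  have hα0 : (0:ℝ) < α := lt_trans one_pos hα
  have hαne : α ≠ 0 := ne_of_gt hα0
  have hsub : (0:ℝ) < α - 1 := by linarith
  have hins : ∀ N : ℕ, Finset.Icc 1 (N+1) = insert (N+1) (Finset.Icc 1 N) := by
    intro N
    ext x; simp [Finset.mem_Icc]; omega
  have hnotmem : ∀ N : ℕ, (N+1) ∉ Finset.Icc 1 N := by
    intro N; simp
  have hzp : ∀ (k N : ℕ), α ^ ((k:ℤ) - (N+1:ℕ) - 1) = α⁻¹ * α ^ ((k:ℤ) - N - 1) := by
    intro k N
    push_cast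
    rw [show ((k:ℤ) - ((N:ℤ)+1) - 1) = (-1) + ((k:ℤ) - N - 1) by ring,
      zpow_add₀ hαne, zpow_neg_one]
  -- geometric sum bound
  have hgeo : ∀ N : ℕ, ∑ k ∈ Finset.Icc 1 N, α ^ ((k : ℤ) - N - 1) ≤ 1/(α-1) := by
    intro N
    induction N with
    | zero =>
      simp only [Finset.Icc_eq_empty_of_lt (by norm_num : (0:ℕ) < 1), Finset.sum_empty]
      positivity
    | succ N ih =>
      rw [hins N, Finset.sum_insert (hnotmem N)]
      have h1 : α ^ (((N:ℤ)+1) - (N+1:ℕ) - 1) = α⁻¹ := by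
        push_cast
        rw [show ((N:ℤ)+1) - ((N:ℤ)+1) - 1 = (-1:ℤ) by ring, zpow_neg_one]
      have h2 : ∑ k ∈ Finset.Icc 1 N, α ^ ((k:ℤ) - (N+1:ℕ) - 1)
          = α⁻¹ * ∑ k ∈ Finset.Icc 1 N, α ^ ((k:ℤ) - N - 1) := by
        rw [Finset.mul_sum]
        exact Finset.sum_congr rfl fun k _ => hzp k N
      push_cast
      push_cast at h1 h2
      rw [h1, h2]
      have hinv : (0:ℝ) < α⁻¹ := by positivity
      calc α⁻¹ + α⁻¹ * ∑ k ∈ Finset.Icc 1 N, α ^ ((k:ℤ) - N - 1)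
          ≤ α⁻¹ + α⁻¹ * (1/(α-1)) := by nlinarith
        _ = α⁻¹ * (1 + 1/(α-1)) := by ring
        _ = 1/(α-1) := by field_simp; ring
  -- main induction
  have hmain : ∀ N : ℕ, a N ≤ α ^ (-(N : ℤ)) * a 0
      + Δt * ∑ k ∈ Finset.Icc 1 N, α ^ ((k:ℤ) - N - 1) * (K + β * a k) := by
    intro N
    induction N with
    | zero => simp
    | succ N ih =>
      have hrecN := hrec N
      have hdivpos : (0:ℝ) < 1/α := by positivity
      have step1 : a (N+1) ≤ (1/α) * (α ^ (-(N : ℤ)) * a 0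
          + Δt * ∑ k ∈ Finset.Icc 1 N, α ^ ((k:ℤ) - N - 1) * (K + β * a k))
          + (Δt / α) * (K + β * a (N+1)) := by
        have := mul_le_mul_of_nonneg_left ih (le_of_lt hdivpos)
        linarith
      refine le_trans step1 (le_of_eq ?_)
      rw [hins N, Finset.sum_insert (hnotmem N)]
      have h1 : α ^ (((N:ℤ)+1) - (N+1:ℕ) - 1) = α⁻¹ := by
        push_cast
        rw [show ((N:ℤ)+1) - ((N:ℤ)+1) - 1 = (-1:ℤ) by ring, zpow_neg_one]
      have h2 : ∑ k ∈ Finset.Icc 1 N, α ^ ((k:ℤ) - (N+1:ℕ) - 1) * (K + β * a k)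
          = α⁻¹ * ∑ k ∈ Finset.Icc 1 N, α ^ ((k:ℤ) - N - 1) * (K + β * a k) := by
        rw [Finset.mul_sum]
        refine Finset.sum_congr rfl fun k _ => ?_
        rw [hzp k N]; ring
      have h3 : α ^ (-((N:ℤ)+1)) = α⁻¹ * α ^ (-(N:ℤ)) := by
        rw [show -((N:ℤ)+1) = (-1) + (-(N:ℤ)) by ring, zpow_add₀ hαne, zpow_neg_one]
      push_cast
      push_cast at h1 h2 h3
      rw [h1, h2, h3]
      field_simp
      ring
  intro N
  have h := hmain N
  have hsplit : ∑ k ∈ Finset.Icc 1 N, α ^ ((k:ℤ) - N - 1) * (K + β * a k)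
      = K * (∑ k ∈ Finset.Icc 1 N, α ^ ((k:ℤ) - N - 1))
        + β * ∑ k ∈ Finset.Icc 1 N, α ^ ((k:ℤ) - N - 1) * a k := by
    rw [Finset.mul_sum, Finset.mul_sum, ← Finset.sum_add_distrib]
    refine Finset.sum_congr rfl fun k _ => ?_
    ring
  rw [hsplit] at h
  have hG := hgeo N
  have hS := hsum N
  have hα1 : 1/(α-1) ≤ α/(α-1) := by
    gcongr <;> linarith
  have hKΔt : 0 ≤ K * Δt := mul_nonneg hK hΔt
  have t1 : Δt * (K * (∑ k ∈ Finset.Icc 1 N, α ^ ((k:ℤ) - N - 1)))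
      ≤ K * Δt * α / (α - 1) := by
    have : Δt * (K * (∑ k ∈ Finset.Icc 1 N, α ^ ((k:ℤ) - N - 1)))
        = K * Δt * (∑ k ∈ Finset.Icc 1 N, α ^ ((k:ℤ) - N - 1)) := by ring
    rw [this]
    calc K * Δt * (∑ k ∈ Finset.Icc 1 N, α ^ ((k:ℤ) - N - 1))
        ≤ K * Δt * (α/(α-1)) := by
          apply mul_le_mul_of_nonneg_left (le_trans hG hα1) hKΔt
      _ = K * Δt * α / (α - 1) := by ring
  have t2 : Δt * (β * ∑ k ∈ Finset.Icc 1 N, α ^ ((k:ℤ) - N - 1) * a k) ≤ β * M := by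
    have : Δt * (β * ∑ k ∈ Finset.Icc 1 N, α ^ ((k:ℤ) - N - 1) * a k)
        = β * (Δt * ∑ k ∈ Finset.Icc 1 N, α ^ ((k:ℤ) - N - 1) * a k) := by ring
    rw [this]
    exact mul_le_mul_of_nonneg_left hS hβ
  calc a N ≤ α ^ (-(N : ℤ)) * a 0
      + Δt * (K * (∑ k ∈ Finset.Icc 1 N, α ^ ((k:ℤ) - N - 1))
        + β * ∑ k ∈ Finset.Icc 1 N, α ^ ((k:ℤ) - N - 1) * a k) := h
    _ = α ^ (-(N : ℤ)) * a 0
      + (Δt * (K * (∑ k ∈ Finset.Icc 1 N, α ^ ((k:ℤ) - N - 1)))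
        + Δt * (β * ∑ k ∈ Finset.Icc 1 N, α ^ ((k:ℤ) - N - 1) * a k)) := by ring
    _ ≤ α ^ (-(N : ℤ)) * a 0 + (K * Δt * α / (α - 1) + β * M) := by linarith
    _ = α ^ (-(N : ℤ)) * a 0 + K * Δt * α / (α - 1) + β * M := by ring
end
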